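/- arXiv:2110.14802 — 6 statements merged into one kernel-verified Lean document; each statement's English description precedes it below -/
import Mathlib

section
/- If x majorizes y in the ordered sense (all partial sums of x dominate those of y, with equal total sums), then the Euclidean projections of x and y onto the isotonic cone {r : r_1 ≥ r_2 ≥ ... ≥ r_n} satisfy the same majorization relation: Proj_C(x) majorizes Proj_C(y). -/
open Finset

/-- Prefix sum of the first `k` coordinates of `x`. -/
def psum {n : ℕ} (x : Fin n → ℝ) (k : ℕ) : ℝ :=
  ∑ i : Fin n, if (i : ℕ) < k then x i else 0

/-- Partial-sum majorization with equal totals: `x ⪰ y`. -/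
def Maj {n : ℕ} (x y : Fin n → ℝ) : Prop :=
  (∀ k, k < n → psum y k ≤ psum x k) ∧ (∑ i, x i = ∑ i, y i)

/-- The isotonic cone `{r : r 0 ≥ r 1 ≥ ... }`. -/
def IsoCone (n : ℕ) : Set (Fin n → ℝ) := {r | Antitone r}

/-- `p` is the Euclidean projection of `y` onto `C`. -/
def IsProj {n : ℕ} (C : Set (Fin n → ℝ)) (y p : Fin n → ℝ) : Prop :=
  p ∈ C ∧ ∀ q ∈ C, ∑ i, (y i - p i) ^ 2 ≤ ∑ i, (y i - q i) ^ 2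

lemma psum_zero {n : ℕ} (x : Fin n → ℝ) : psum x 0 = 0 := by simp [psum]

lemma psum_succ {n : ℕ} (x : Fin n → ℝ) {k : ℕ} (hk : k < n) :
    psum x (k + 1) = psum x k + x ⟨k, hk⟩ := by
  unfold psum
  have h : ∀ i : Fin n, (if (i : ℕ) < k + 1 then x i else 0)
      = (if (i : ℕ) < k then x i else 0) + (if i = ⟨k, hk⟩ then x i else 0) := by
    intro i
    rcases lt_trichotomy (i : ℕ) k with h | h | h
    · have h1 : (i : ℕ) < k + 1 := by omega
      have h2 : i ≠ ⟨k, hk⟩ := by simp [Fin.ext_iff]; omega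
      simp [h, h1, h2]
    · have h1 : (i : ℕ) < k + 1 := by omega
      have h2 : i = ⟨k, hk⟩ := by simp [Fin.ext_iff]; omega
      simp [h1, h2, h]
    · have h1 : ¬ (i : ℕ) < k + 1 := by omega
      have h2 : i ≠ ⟨k, hk⟩ := by simp [Fin.ext_iff]; omega
      have h3 : ¬ (i : ℕ) < k := by omega
      simp [h1, h2, h3]
  rw [Finset.sum_congr rfl fun i _ => h i, Finset.sum_add_distrib,
    Finset.sum_ite_eq' univ (⟨k, hk⟩ : Fin n) x]
  simp

lemma psum_top {n : ℕ} (x : Fin n → ℝ) {k : ℕ} (hk : n ≤ k) :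
    psum x k = ∑ i, x i := by
  unfold psum
  apply Finset.sum_congr rfl
  intro i _
  simp [lt_of_lt_of_le i.isLt hk]

lemma psum_sub {n : ℕ} (x y : Fin n → ℝ) (k : ℕ) :
    psum (fun i => x i - y i) k = psum x k - psum y k := by
  unfold psum
  rw [← Finset.sum_sub_distrib]
  apply Finset.sum_congr rfl
  intro i _
  split <;> simp

lemma sum_mul_ind {n : ℕ} (v : Fin n → ℝ) (k : ℕ) :
    ∑ i, v i * (if (i : ℕ) < k then (1:ℝ) else 0) = psum v k := by
  unfold psum
  apply Finset.sum_congr rfl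
  intro i _
  split <;> simp

lemma proj_dir {n : ℕ} {y p : Fin n → ℝ} (hp : IsProj (IsoCone n) y p)
    (e : Fin n → ℝ)
    (he : ∀ t : ℝ, 0 < t → t ≤ 1 → (fun i => p i + t * e i) ∈ IsoCone n) :
    ∑ i, (y i - p i) * e i ≤ 0 := by
  by_contra hcon
  push_neg at hcon
  set s := ∑ i, (y i - p i) * e i with hs
  set E := ∑ i, e i ^ 2 with hE
  have hE0 : 0 ≤ E := Finset.sum_nonneg fun i _ => sq_nonneg _
  have hden : (0:ℝ) < E + 1 := by linarith
  set t := min 1 (s / (E + 1)) with ht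
  have ht0 : 0 < t := lt_min one_pos (div_pos hcon hden)
  have ht1 : t ≤ 1 := min_le_left _ _
  have hts : t * (E + 1) ≤ s := by
    have h := min_le_right 1 (s / (E + 1))
    calc t * (E + 1) ≤ s / (E + 1) * (E + 1) := by
          apply mul_le_mul_of_nonneg_right h (le_of_lt hden)
      _ = s := div_mul_cancel₀ s (ne_of_gt hden)
  have key := hp.2 _ (he t ht0 ht1)
  have hexp : ∑ i, (y i - (p i + t * e i)) ^ 2
      = ∑ i, (y i - p i) ^ 2 - 2 * t * s + t ^ 2 * E := by
    rw [hs, hE, Finset.mul_sum, Finset.mul_sum, ← Finset.sum_sub_distrib,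
      ← Finset.sum_add_distrib]
    apply Finset.sum_congr rfl
    intro i _
    ring
  rw [hexp] at key
  have h1 : 2 * t * s ≤ t ^ 2 * E := by linarith
  nlinarith [mul_pos ht0 hcon, mul_nonneg (mul_nonneg ht0.le ht0.le) hE0,
    mul_nonneg ht0.le hE0]

lemma proj_total {n : ℕ} {y p : Fin n → ℝ} (hp : IsProj (IsoCone n) y p) :
    ∑ i, p i = ∑ i, y i := by
  have hmono : Antitone p := hp.1
  have h1 := proj_dir hp (fun _ => (1:ℝ)) (by
    intro t ht0 ht1
    intro i j hij
    simp only
    have := hmono hij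
    linarith)
  have h2 := proj_dir hp (fun _ => (-1:ℝ)) (by
    intro t ht0 ht1
    intro i j hij
    simp only
    have := hmono hij
    linarith)
  simp only [mul_one, mul_neg_one] at h1 h2
  have hsub : ∑ i, (y i - p i) = ∑ i, y i - ∑ i, p i := Finset.sum_sub_distrib _ _
  have h2' : ∑ i, -(y i - p i) = -∑ i, (y i - p i) := by rw [Finset.sum_neg_distrib]
  rw [h2'] at h2
  linarith

lemma proj_psum_ge {n : ℕ} {y p : Fin n → ℝ} (hp : IsProj (IsoCone n) y p) (k : ℕ) :
    psum y k ≤ psum p k := by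
  have hmono : Antitone p := hp.1
  have h := proj_dir hp (fun i => if (i : ℕ) < k then (1:ℝ) else 0) (by
    intro t ht0 ht1
    intro i j hij
    simp only
    have hij' : (i : ℕ) ≤ (j : ℕ) := hij
    by_cases hjk : (j : ℕ) < k
    · have hik : (i : ℕ) < k := by omega
      simp only [if_pos hjk, if_pos hik]
      have := hmono hij
      linarith
    · by_cases hik : (i : ℕ) < k
      · simp only [if_neg hjk, if_pos hik]
        have := hmono hij
        nlinarith
      · simp only [if_neg hjk, if_neg hik]
        have := hmono hij
        linarith)
  rw [sum_mul_ind (fun i => y i - p i) k, psum_sub] at h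
  linarith

lemma proj_touch {n : ℕ} {y p : Fin n → ℝ} (hp : IsProj (IsoCone n) y p)
    (k : ℕ) (hk : k + 1 < n)
    (hgt : p ⟨k + 1, hk⟩ < p ⟨k, by omega⟩) :
    psum p (k + 1) ≤ psum y (k + 1) := by
  have hmono : Antitone p := hp.1
  set δ := p ⟨k, by omega⟩ - p ⟨k + 1, hk⟩ with hδ
  have hδ0 : 0 < δ := sub_pos.mpr hgt
  have h := proj_dir hp (fun i => -δ * (if (i : ℕ) < k + 1 then 1 else 0)) (by
    intro t ht0 ht1
    intro i j hij
    simp only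
    have hij' : (i : ℕ) ≤ (j : ℕ) := hij
    by_cases hjk : (j : ℕ) < k + 1
    · have hik : (i : ℕ) < k + 1 := by omega
      simp only [if_pos hjk, if_pos hik]
      have := hmono hij
      linarith
    · by_cases hik : (i : ℕ) < k + 1
      · simp only [if_neg hjk, if_pos hik]
        have h1 : p j ≤ p ⟨k + 1, hk⟩ := hmono (show (⟨k + 1, hk⟩ : Fin n) ≤ j from by
          rw [Fin.le_def]; simp; omega)
        have h2 : p ⟨k, by omega⟩ ≤ p i := hmono (show i ≤ (⟨k, by omega⟩ : Fin n) from by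
          rw [Fin.le_def]; simp; omega)
        have h3 : t * δ ≤ δ := by nlinarith
        simp only [mul_zero, mul_one, add_zero]
        nlinarith
      · simp only [if_neg hjk, if_neg hik]
        have := hmono hij
        linarith)
  have hsum : ∑ i, (y i - p i) * (-δ * (if (i : ℕ) < k + 1 then (1:ℝ) else 0))
      = -δ * (psum y (k + 1) - psum p (k + 1)) := by
    rw [← psum_sub y p (k + 1), ← sum_mul_ind (fun i => y i - p i) (k + 1),
      Finset.mul_sum]
    apply Finset.sum_congr rfl
    intro i _
    ring
  rw [hsum] at h
  nlinarith

lemma sum_incr_ge {f : ℕ → ℝ} {a k : ℕ} (hak : a ≤ k) {d : ℝ}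
    (h : ∀ j, a ≤ j → j < k → d ≤ f (j + 1) - f j) :
    ((k : ℝ) - a) * d ≤ f k - f a := by
  induction k, hak using Nat.le_induction with
  | base => simp
  | succ k hk ih =>
    have h1 := h k hk (Nat.lt_succ_self k)
    have h2 : ((k : ℝ) - a) * d ≤ f k - f a :=
      ih fun j hj hjk => h j hj (Nat.lt_succ_of_lt hjk)
    push_cast
    nlinarith

lemma sum_incr_le {f : ℕ → ℝ} {a k : ℕ} (hak : a ≤ k) {d : ℝ}
    (h : ∀ j, a ≤ j → j < k → f (j + 1) - f j ≤ d) :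
    f k - f a ≤ ((k : ℝ) - a) * d := by
  have := sum_incr_ge (f := fun m => -f m) hak (d := -d)
    (fun j hj hjk => by have := h j hj hjk; linarith)
  linarith

lemma chord {f : ℕ → ℝ} {a k b : ℕ} (hak : a ≤ k) (hkb : k ≤ b)
    (hd : ∀ i j, a ≤ i → i ≤ j → j + 1 ≤ b → f (j + 1) - f j ≤ f (i + 1) - f i) :
    ((b : ℝ) - k) * f a + ((k : ℝ) - a) * f b ≤ ((b : ℝ) - a) * f k := by
  rcases eq_or_lt_of_le hkb with heq | hkb'
  · subst heq
    have h0 : ((k : ℝ) - k) * f a = 0 := by ring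
    linarith [h0]
  rcases eq_or_lt_of_le hak with heq | hak'
  · subst heq
    have h0 : ((a : ℝ) - a) * f b = 0 := by ring
    linarith [h0]
  set d := f (k + 1) - f k with hdk
  have h1 : ((k : ℝ) - a) * d ≤ f k - f a :=
    sum_incr_ge hak fun j hj hjk => hd j k hj (le_of_lt hjk) hkb'
  have h2 : f b - f k ≤ ((b : ℝ) - k) * d :=
    sum_incr_le hkb fun j hj hjb => hd k j hak hj hjb
  have hbk : (0:ℝ) ≤ (b : ℝ) - k := by
    have : (k:ℝ) ≤ b := by exact_mod_cast hkb
    linarith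
  have hka : (0:ℝ) ≤ (k : ℝ) - a := by
    have : (a:ℝ) ≤ k := by exact_mod_cast hak
    linarith
  nlinarith [mul_le_mul_of_nonneg_left h1 hbk, mul_le_mul_of_nonneg_left h2 hka]

/-- Majorization is preserved under Euclidean projection onto the isotonic cone. -/
theorem isotonic_projection_preserves_majorization {n : ℕ} (x y px py : Fin n → ℝ)
    (hmaj : Maj x y)
    (hpx : IsProj (IsoCone n) x px) (hpy : IsProj (IsoCone n) y py) :
    Maj px py := by
  classical
  obtain ⟨hmaj1, hmaj2⟩ := hmaj
  have hmx : Antitone px := hpx.1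
  have hmy : Antitone py := hpy.1
  have htx : ∑ i, px i = ∑ i, x i := proj_total hpx
  have hty : ∑ i, py i = ∑ i, y i := proj_total hpy
  constructor
  · intro k hk
    set Pr : ℕ → Prop := fun j => psum py j = psum y j with hPrdef
    have hPr0 : Pr 0 := by simp [hPrdef, psum_zero]
    have hPrn : Pr n := by
      simp only [hPrdef]
      rw [psum_top py le_rfl, psum_top y le_rfl, hty]
    set a := Nat.findGreatest Pr k with ha
    have hak : a ≤ k := Nat.findGreatest_le k
    have haP : Pr a := Nat.findGreatest_spec (Nat.zero_le k) hPr0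
    have haG : ∀ j, a < j → j ≤ k → ¬ Pr j := fun j h1 h2 =>
      Nat.findGreatest_is_greatest h1 h2
    have hbex : ∃ m, Pr (k + m) := ⟨n - k, by
      have : k + (n - k) = n := by omega
      rw [this]; exact hPrn⟩
    set b := k + Nat.find hbex with hb
    have hkb : k ≤ b := Nat.le_add_right _ _
    have hbP : Pr b := Nat.find_spec hbex
    have hbn : b ≤ n := by
      have h := Nat.find_min' hbex (m := n - k) (by
        have : k + (n - k) = n := by omega
        rw [this]; exact hPrn)
      omega
    have hbM : ∀ j, k ≤ j → j < b → ¬ Pr j := by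
      intro j h1 h2
      have hm : j - k < Nat.find hbex := by omega
      have h3 := Nat.find_min hbex hm
      have : k + (j - k) = j := by omega
      rwa [this] at h3
    have hab : a ≤ b := le_trans hak hkb
    rcases eq_or_lt_of_le hab with heq | hlt
    · have hak' : a = k := by omega
      have hkeq : psum py k = psum y k := by rw [← hak']; exact haP
      calc psum py k = psum y k := hkeq
        _ ≤ psum x k := hmaj1 k hk
        _ ≤ psum px k := proj_psum_ge hpx k
    · have han : a < n := lt_of_le_of_lt hak hk
      have hne : ∀ j, a < j → j < b → psum py j ≠ psum y j := by
        intro j h1 h2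
        by_cases hjk : j ≤ k
        · exact haG j h1 hjk
        · exact hbM j (by omega) h2
      set c := py ⟨a, han⟩ with hc
      have hQincr : ∀ j, a ≤ j → j < b → psum py (j + 1) - psum py j = c := by
        intro j hja
        induction j, hja using Nat.le_induction with
        | base =>
          intro hb'
          rw [psum_succ py han]
          ring
        | succ j hj ih =>
          intro hb'
          have hjn : j < n := by omega
          have hjn' : j + 1 < n := by omega
          have hprev := ih (by omega)
          rw [psum_succ py hjn] at hprev
          have hcj : py ⟨j, hjn⟩ = c := by linarith
          have hstep : py ⟨j, hjn⟩ = py ⟨j + 1, hjn'⟩ := by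
            by_contra hne'
            have hgt : py ⟨j + 1, hjn'⟩ < py ⟨j, hjn⟩ :=
              lt_of_le_of_ne (hmy (show (⟨j, hjn⟩ : Fin n) ≤ ⟨j + 1, hjn'⟩ from by
                rw [Fin.le_def]; simp)) (Ne.symm hne')
            have h1 := proj_touch hpy j hjn' hgt
            have h2 := proj_psum_ge hpy (j + 1)
            exact hne (j + 1) (by omega) hb' (le_antisymm h1 h2)
          rw [psum_succ py hjn']
          rw [← hstep]
          linarith
      have hQk : psum py k - psum py a = ((k : ℝ) - a) * c := by
        have hge := sum_incr_ge (f := fun m => psum py m) hak (d := c)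
          (fun j hj hjk => (hQincr j hj (by omega)).ge)
        have hle := sum_incr_le (f := fun m => psum py m) hak (d := c)
          (fun j hj hjk => (hQincr j hj (by omega)).le)
        linarith
      have hQb : psum py b - psum py a = ((b : ℝ) - a) * c := by
        have hge := sum_incr_ge (f := fun m => psum py m) hab (d := c)
          (fun j hj hjk => (hQincr j hj hjk).ge)
        have hle := sum_incr_le (f := fun m => psum py m) hab (d := c)
          (fun j hj hjk => (hQincr j hj hjk).le)
        linarith
      have hchord := chord (f := fun m => psum px m) hak hkb (by
        intro i j hi hij hjb
        have hjn : j < n := by omega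
        have hin : i < n := by omega
        rw [psum_succ px hjn, psum_succ px hin]
        have hle : px ⟨j, hjn⟩ ≤ px ⟨i, hin⟩ :=
          hmx (show (⟨i, hin⟩ : Fin n) ≤ ⟨j, hjn⟩ from by rw [Fin.le_def]; simpa)
        linarith)
      have hPa : psum py a ≤ psum px a := by
        have h1 : psum py a = psum y a := haP
        rw [h1]
        exact le_trans (hmaj1 a (by omega)) (proj_psum_ge hpx a)
      have hPb : psum py b ≤ psum px b := by
        rcases eq_or_lt_of_le hbn with heq | hbn'
        · rw [heq, psum_top py le_rfl, psum_top px le_rfl, hty, htx, hmaj2]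
        · have h1 : psum py b = psum y b := hbP
          rw [h1]
          exact le_trans (hmaj1 b hbn') (proj_psum_ge hpx b)
      have hba : (0:ℝ) < (b : ℝ) - a := by
        have : (a:ℝ) < b := by exact_mod_cast hlt
        linarith
      have hbk0 : (0:ℝ) ≤ (b : ℝ) - k := by
        have : (k:ℝ) ≤ b := by exact_mod_cast hkb
        linarith
      have hka0 : (0:ℝ) ≤ (k : ℝ) - a := by
        have : (a:ℝ) ≤ k := by exact_mod_cast hak
        linarith
      have e1 : ((b:ℝ) - a) * psum py k
          = ((b:ℝ) - k) * psum py a + ((k:ℝ) - a) * psum py b := by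
        linear_combination ((b:ℝ) - a) * hQk - ((k:ℝ) - a) * hQb
      have e2 := mul_le_mul_of_nonneg_left hPa hbk0
      have e3 := mul_le_mul_of_nonneg_left hPb hka0
      have final : ((b:ℝ) - a) * psum py k ≤ ((b:ℝ) - a) * psum px k := by linarith
      exact le_of_mul_le_mul_left final hba
  · rw [htx, hty]; exact hmaj2
end

section
/- (Hardy–Littlewood–Pólya) If f : ℝ → ℝ is convex, x and y are nonincreasing vectors in ℝ^n, and x ⪰ y (all partial sums of x dominate those of y with equal total sum), then ∑_{i=1}^n f(x_i) ≥ ∑_{i=1}^n f(y_i). -/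
open Finset

/- ## Auxiliary slope machinery -/

/-- Secant slope of `f` between `a` and `b`. -/
noncomputable def sl (f : ℝ → ℝ) (a b : ℝ) : ℝ := (f b - f a) / (b - a)

/-- Right derivative-like quantity: infimum of slopes to the right. -/
noncomputable def rd (f : ℝ → ℝ) (t : ℝ) : ℝ := sInf (sl f t '' Set.Ioi t)

lemma sl_comm (f : ℝ → ℝ) (a b : ℝ) : sl f a b = sl f b a := by
  unfold sl
  rw [← neg_div_neg_eq]
  simp [neg_sub]

lemma sl_adj {f : ℝ → ℝ} (hf : ConvexOn ℝ Set.univ f) {a b c : ℝ} (h1 : a < b) (h2 : b < c) :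
    sl f a b ≤ sl f b c :=
  hf.slope_mono_adjacent (Set.mem_univ a) (Set.mem_univ c) h1 h2

lemma sl_secant {f : ℝ → ℝ} (hf : ConvexOn ℝ Set.univ f) {a u v : ℝ} (hu : u ≠ a) (hv : v ≠ a)
    (huv : u ≤ v) : sl f a u ≤ sl f a v :=
  hf.secant_mono (Set.mem_univ a) (Set.mem_univ u) (Set.mem_univ v) hu hv huv

lemma sl_mono {f : ℝ → ℝ} (hf : ConvexOn ℝ Set.univ f) {a b a' b' : ℝ} (hab : a < b)
    (hab' : a' < b') (ha : a ≤ a') (hb : b ≤ b') : sl f a b ≤ sl f a' b' := by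
  have hab'' : a < b' := lt_of_lt_of_le hab hb
  calc sl f a b ≤ sl f a b' := sl_secant hf hab.ne' hab''.ne' hb
    _ = sl f b' a := sl_comm f a b'
    _ ≤ sl f b' a' := sl_secant hf hab''.ne hab'.ne ha
    _ = sl f a' b' := sl_comm f b' a'

lemma rd_le {f : ℝ → ℝ} (hf : ConvexOn ℝ Set.univ f) {t s : ℝ} (h : t < s) :
    rd f t ≤ sl f t s := by
  apply csInf_le
  · refine ⟨sl f (t - 1) t, ?_⟩
    rintro z ⟨u, hu, rfl⟩
    exact sl_adj hf (by linarith) hu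
  · exact ⟨s, h, rfl⟩

lemma le_rd {f : ℝ → ℝ} (hf : ConvexOn ℝ Set.univ f) {a t : ℝ} (h : a < t) :
    sl f a t ≤ rd f t := by
  apply le_csInf
  · exact ⟨sl f t (t + 1), t + 1, by simp only [Set.mem_Ioi]; linarith, rfl⟩
  · rintro z ⟨u, hu, rfl⟩
    exact sl_adj hf h hu

lemma rd_mono {f : ℝ → ℝ} (hf : ConvexOn ℝ Set.univ f) {t t' : ℝ} (h : t' ≤ t) :
    rd f t' ≤ rd f t := by
  rcases eq_or_lt_of_le h with rfl | h
  · exact le_refl _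
  · exact (rd_le hf h).trans (le_rd hf h)

lemma rd_le_sl {f : ℝ → ℝ} (hf : ConvexOn ℝ Set.univ f) {t a b : ℝ} (hab : a < b) (hta : t ≤ a) :
    rd f t ≤ sl f a b := by
  have htb : t < b := lt_of_le_of_lt hta hab
  calc rd f t ≤ sl f t b := rd_le hf htb
    _ = sl f b t := sl_comm f t b
    _ ≤ sl f b a := sl_secant hf htb.ne hab.ne hta
    _ = sl f a b := sl_comm f b a

lemma sl_le_rd {f : ℝ → ℝ} (hf : ConvexOn ℝ Set.univ f) {a b t : ℝ} (hab : a < b) (hbt : b ≤ t) :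
    sl f a b ≤ rd f t := by
  have hat : a < t := lt_of_lt_of_le hab hbt
  calc sl f a b ≤ sl f a t := sl_secant hf hab.ne' hat.ne' hbt
    _ ≤ rd f t := le_rd hf hat

/-- psum as a range sum of an extended function. -/
lemma psum_eq_range {n : ℕ} (z : Fin n → ℝ) {k : ℕ} (hk : k ≤ n) :
    psum z k = ∑ j ∈ range k, (if h : j < n then z ⟨j, h⟩ else 0) := by
  unfold psum
  have step : (∑ i : Fin n, if (i : ℕ) < k then z i else 0)
      = ∑ i : Fin n, (fun j => if j < k then (if h : j < n then z ⟨j, h⟩ else 0) else 0) (i : ℕ) :=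
    Finset.sum_congr rfl (fun i _ => by simp [i.is_lt])
  rw [step,
    Fin.sum_univ_eq_sum_range (fun j => if j < k then (if h : j < n then z ⟨j, h⟩ else 0) else 0) n]
  · rw [← Finset.sum_subset (Finset.range_subset_range.mpr hk)]
    · apply Finset.sum_congr rfl
      intro j hj
      have hjk : j < k := Finset.mem_range.mp hj
      have hjn : j < n := lt_of_lt_of_le hjk hk
      simp [hjn, hjk]
    · intro j _ hj
      have : ¬ j < k := fun h => hj (Finset.mem_range.mpr h)
      simp [this]

/-- Hardy–Littlewood–Pólya inequality. -/
theorem hardy_littlewood_polya {n : ℕ} (f : ℝ → ℝ) (hf : ConvexOn ℝ Set.univ f)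
    (x y : Fin n → ℝ) (hx : Antitone x) (hy : Antitone y) (hmaj : Maj x y) :
    ∑ i, f (y i) ≤ ∑ i, f (x i) := by
  classical
  set c : Fin n → ℝ := fun i => if x i = y i then rd f (x i)
    else sl f (min (x i) (y i)) (max (x i) (y i)) with hc
  -- pointwise identity
  have hpt : ∀ i, f (x i) - f (y i) = c i * (x i - y i) := by
    intro i
    rcases eq_or_ne (x i) (y i) with h | h
    · simp [hc, h]
    · simp only [hc, if_neg h]
      rcases lt_or_gt_of_ne h with hlt | hlt
      · rw [min_eq_left hlt.le, max_eq_right hlt.le]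
        unfold sl
        have : y i - x i ≠ 0 := sub_ne_zero.mpr hlt.ne'
        field_simp
        ring
      · rw [min_eq_right hlt.le, max_eq_left hlt.le]
        unfold sl
        have : x i - y i ≠ 0 := sub_ne_zero.mpr hlt.ne'
        field_simp
  -- c is antitone
  have hmono : ∀ i j : Fin n, i ≤ j → c j ≤ c i := by
    intro i j hij
    have hxx : x j ≤ x i := hx hij
    have hyy : y j ≤ y i := hy hij
    rcases eq_or_ne (x i) (y i) with hi | hi <;> rcases eq_or_ne (x j) (y j) with hj | hj
    · simp only [hc, if_pos hi, if_pos hj]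
      exact rd_mono hf hxx
    · -- i degenerate, j not
      simp only [hc, if_pos hi, if_neg hj]
      refine sl_le_rd hf (min_lt_max.mpr hj) ?_
      exact max_le hxx (hi ▸ hyy)
    · -- j degenerate, i not
      simp only [hc, if_neg hi, if_pos hj]
      refine rd_le_sl hf (min_lt_max.mpr hi) ?_
      exact le_min hxx (hj ▸ hyy)
    · simp only [hc, if_neg hi, if_neg hj]
      exact sl_mono hf (min_lt_max.mpr hj) (min_lt_max.mpr hi)
        (min_le_min hxx hyy) (max_le_max hxx hyy)
  -- extended sequences
  set D : ℕ → ℝ := fun j => if h : j < n then x ⟨j, h⟩ - y ⟨j, h⟩ else 0 with hD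
  set C : ℕ → ℝ := fun j => if h : j < n then c ⟨j, h⟩ else 0 with hC
  have hT : ∀ k, k ≤ n → ∑ j ∈ range k, D j = psum x k - psum y k := by
    intro k hk
    rw [psum_eq_range x hk, psum_eq_range y hk, ← Finset.sum_sub_distrib]
    apply Finset.sum_congr rfl
    intro j _
    by_cases h : j < n <;> simp [hD, h]
  have hT0 : ∀ k, k < n → 0 ≤ ∑ j ∈ range k, D j := by
    intro k hk
    rw [hT k hk.le]
    have := hmaj.1 k hk
    linarith
  have hTn : ∑ j ∈ range n, D j = 0 := by
    rw [hT n le_rfl]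
    have h1 : psum x n = ∑ i, x i := by
      unfold psum; apply Finset.sum_congr rfl; intro i _; simp [i.is_lt]
    have h2 : psum y n = ∑ i, y i := by
      unfold psum; apply Finset.sum_congr rfl; intro i _; simp [i.is_lt]
    rw [h1, h2, hmaj.2, sub_self]
  -- Abel summation
  have habel := Finset.sum_range_by_parts C D n
  simp only [smul_eq_mul] at habel
  have hkey : 0 ≤ ∑ i ∈ range n, C i * D i := by
    rw [habel, hTn, mul_zero, zero_sub, neg_nonneg]
    apply Finset.sum_nonpos
    intro i hi
    have hin : i + 1 < n := by
      have := Finset.mem_range.mp hi; omega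
    have hin' : i < n := by omega
    have h1 : C (i + 1) ≤ C i := by
      simp only [hC, dif_pos hin, dif_pos hin']
      exact hmono ⟨i, hin'⟩ ⟨i + 1, hin⟩ (by simp [Fin.le_def])
    have h2 : 0 ≤ ∑ j ∈ range (i + 1), D j := hT0 (i + 1) hin
    have : C (i + 1) - C i ≤ 0 := by linarith
    exact mul_nonpos_of_nonpos_of_nonneg this h2
  -- put it together
  have hsum : ∑ i, f (x i) - ∑ i, f (y i) = ∑ i ∈ range n, C i * D i := by
    rw [← Finset.sum_sub_distrib]
    have step : (∑ i : Fin n, (f (x i) - f (y i)))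
        = ∑ i : Fin n, (fun j => C j * D j) (i : ℕ) := by
      apply Finset.sum_congr rfl
      intro i _
      simp only [hC, hD, dif_pos i.is_lt, Fin.eta]
      exact hpt i
    rw [step, Fin.sum_univ_eq_sum_range (fun j => C j * D j) n]
  linarith
end

section
/- If x ⪰ y (in the partial-sum sense with equal totals), then there exists a finite sequence z^1 = x, z^2, ..., z^m = y such that each z^l is an upward swap of z^{l+1}; i.e., y can be transformed into x by a finite sequence of upward swaps. -/
open Finset

/-- `u` is an upward swap of `v`. -/
def UpSwap {n : ℕ} (u v : Fin n → ℝ) : Prop :=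
  ∃ i j : Fin n, i < j ∧ (∀ k : Fin n, k ≠ i → k ≠ j → u k = v k) ∧
    u i + u j = v i + v j ∧ v i ≤ u i

lemma psum_sub_s2 {n : ℕ} (x y : Fin n → ℝ) (k : ℕ) :
    psum x k - psum y k = ∑ t : Fin n, if (t : ℕ) < k then x t - y t else 0 := by
  unfold psum
  rw [← Finset.sum_sub_distrib]
  exact Finset.sum_congr rfl fun t _ => by split_ifs <;> ring

lemma psum_total {n : ℕ} (x : Fin n → ℝ) : psum x n = ∑ t, x t := by
  unfold psum
  exact Finset.sum_congr rfl fun t _ => if_pos t.isLt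

lemma key {n : ℕ} : ∀ d : ℕ, ∀ x y : Fin n → ℝ, Maj x y →
    (univ.filter fun t => x t ≠ y t).card ≤ d →
    ∃ (m : ℕ) (z : ℕ → Fin n → ℝ), z 0 = x ∧ z m = y ∧
      ∀ l, l < m → UpSwap (z l) (z (l + 1)) := by
  intro d
  induction d with
  | zero =>
    intro x y _ hc
    have hxy : x = y := by
      funext t
      by_contra h
      have ht : t ∈ univ.filter fun t => x t ≠ y t := by simp [h]
      have := Finset.card_pos.mpr ⟨t, ht⟩
      omega
    exact ⟨0, fun _ => x, rfl, hxy, fun l hl => (Nat.not_lt_zero l hl).elim⟩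
  | succ d ih =>
    intro x y hmaj hc
    by_cases hxy : x = y
    · exact ⟨0, fun _ => x, rfl, hxy, fun l hl => (Nat.not_lt_zero l hl).elim⟩
    set S := univ.filter (fun t => x t ≠ y t) with hS
    have hSne : S.Nonempty := by
      by_contra h
      apply hxy
      funext t
      by_contra ht
      exact h ⟨t, by simp [hS, ht]⟩
    set i := S.min' hSne with hi
    have hiS : i ∈ S := S.min'_mem hSne
    have hixy : x i ≠ y i := by
      have := hiS
      rw [hS, mem_filter] at this
      exact this.2
    have hbefore : ∀ t : Fin n, (t : ℕ) < (i : ℕ) → x t = y t := by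
      intro t ht
      by_contra h
      have hts : t ∈ S := by rw [hS, mem_filter]; exact ⟨mem_univ t, h⟩
      have : i ≤ t := S.min'_le t hts
      exact absurd ht (not_lt.mpr (by exact_mod_cast this))
    have hgi : (∑ t : Fin n, if (t : ℕ) < (i : ℕ) + 1 then x t - y t else 0)
        = x i - y i := by
      rw [Fintype.sum_eq_single i]
      · simp
      · intro t ht
        by_cases h : (t : ℕ) < (i : ℕ) + 1
        · rw [if_pos h]
          have htv : (t : ℕ) ≠ (i : ℕ) := fun h' => ht (Fin.ext h')
          have : (t : ℕ) < (i : ℕ) := lt_of_le_of_ne (Nat.lt_succ_iff.mp h) htv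
          rw [hbefore t this]; ring
        · rw [if_neg h]
    have hxyi : y i < x i := by
      have h1 : 0 ≤ x i - y i := by
        by_cases hn : (i : ℕ) + 1 < n
        · have hle := hmaj.1 _ hn
          have h2 : 0 ≤ psum x ((i : ℕ) + 1) - psum y ((i : ℕ) + 1) := by linarith
          rw [psum_sub_s2, hgi] at h2; exact h2
        · have hin : (i : ℕ) + 1 = n := by have := i.isLt; omega
          have h2 : psum x ((i : ℕ) + 1) - psum y ((i : ℕ) + 1) = 0 := by
            rw [hin, psum_total, psum_total, hmaj.2]; ring
          rw [psum_sub_s2, hgi] at h2; linarith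
      rcases h1.lt_or_eq with h | h
      · linarith
      · exact absurd (by linarith : x i = y i) hixy
    set T := univ.filter (fun t => x t < y t) with hT
    have hTne : T.Nonempty := by
      by_contra h
      have hall : ∀ t, y t ≤ x t := by
        intro t
        by_contra ht
        exact h ⟨t, by rw [hT, mem_filter]; exact ⟨mem_univ t, not_le.mp ht⟩⟩
      have hsum0 : ∑ t, (x t - y t) = 0 := by
        rw [Finset.sum_sub_distrib, hmaj.2]; ring
      have hz := (Finset.sum_eq_zero_iff_of_nonneg
        (fun t _ => by linarith [hall t])).mp hsum0 i (mem_univ i)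
      linarith
    set j := T.min' hTne with hj
    have hjT : j ∈ T := T.min'_mem hTne
    have hjxy : x j < y j := by
      have := hjT
      rw [hT, mem_filter] at this
      exact this.2
    have hjS : j ∈ S := by
      rw [hS, mem_filter]
      exact ⟨mem_univ j, by intro h; rw [h] at hjxy; linarith⟩
    have hij : i < j := by
      have h1 : i ≤ j := S.min'_le j hjS
      have h2 : i ≠ j := fun h => by rw [h] at hxyi; linarith
      exact lt_of_le_of_ne h1 h2
    have hbeforej : ∀ t : Fin n, (t : ℕ) < (j : ℕ) → y t ≤ x t := by
      intro t ht
      by_contra h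
      have htT : t ∈ T := by rw [hT, mem_filter]; exact ⟨mem_univ t, not_le.mp h⟩
      have : j ≤ t := T.min'_le t htT
      exact absurd ht (not_lt.mpr (by exact_mod_cast this))
    set δ := min (x i - y i) (y j - x j) with hδ
    have hδpos : 0 < δ := lt_min (by linarith) (by linarith)
    set y' := fun t => if t = i then y i + δ else if t = j then y j - δ else y t with hy'
    have hijne : i ≠ j := ne_of_lt hij
    have hy'i : y' i = y i + δ := by simp [hy']
    have hy'j : y' j = y j - δ := by simp [hy', hijne.symm]
    have hy'other : ∀ t, t ≠ i → t ≠ j → y' t = y t := by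
      intro t h1 h2; simp [hy', h1, h2]
    have hup : UpSwap y' y :=
      ⟨i, j, hij, fun k h1 h2 => hy'other k h1 h2,
        by rw [hy'i, hy'j]; ring, by rw [hy'i]; linarith⟩
    have hpsum' : ∀ k, psum y' k
        = psum y k + (if (i : ℕ) < k then δ else 0) - (if (j : ℕ) < k then δ else 0) := by
      intro k
      have h1 := psum_sub_s2 y' y k
      have h2 : (∑ t : Fin n, if (t : ℕ) < k then y' t - y t else 0)
          = (if (i : ℕ) < k then δ else 0) - (if (j : ℕ) < k then δ else 0) := by
        have hpt : ∀ t : Fin n, (if (t : ℕ) < k then y' t - y t else 0)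
            = (if t = i then (if (i : ℕ) < k then δ else 0) else 0)
            - (if t = j then (if (j : ℕ) < k then δ else 0) else 0) := by
          intro t
          by_cases ht1 : t = i
          · subst ht1
            rw [hy'i, if_pos rfl, if_neg hijne]
            split_ifs <;> ring
          · by_cases ht2 : t = j
            · subst ht2
              rw [hy'j, if_neg ht1, if_pos rfl]
              split_ifs <;> ring
            · rw [hy'other t ht1 ht2, if_neg ht1, if_neg ht2]
              split_ifs <;> ring
        rw [Finset.sum_congr rfl (fun t _ => hpt t), Finset.sum_sub_distrib,
          Finset.sum_ite_eq' univ i, Finset.sum_ite_eq' univ j]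
        simp
      rw [h2] at h1
      linarith
    have hmaj' : Maj x y' := by
      constructor
      · intro k hk
        rw [hpsum' k]
        by_cases hik : (i : ℕ) < k
        · by_cases hjk : (j : ℕ) < k
          · rw [if_pos hik, if_pos hjk]
            linarith [hmaj.1 k hk]
          · rw [if_pos hik, if_neg hjk]
            have hkj : k ≤ (j : ℕ) := not_lt.mp hjk
            have hterm : ∀ t : Fin n, 0 ≤ (if (t : ℕ) < k then x t - y t else 0) := by
              intro t
              by_cases ht : (t : ℕ) < k
              · rw [if_pos ht]
                have : (t : ℕ) < (j : ℕ) := lt_of_lt_of_le ht hkj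
                linarith [hbeforej t this]
              · rw [if_neg ht]
            have hsingle : x i - y i
                ≤ ∑ t : Fin n, if (t : ℕ) < k then x t - y t else 0 := by
              have hs := Finset.single_le_sum
                (f := fun t : Fin n => if (t : ℕ) < k then x t - y t else 0)
                (fun t _ => hterm t) (mem_univ i)
              have hs' : (if (i : ℕ) < k then x i - y i else 0)
                  ≤ ∑ t : Fin n, if (t : ℕ) < k then x t - y t else 0 := hs
              rwa [if_pos hik] at hs'
            have hg := psum_sub_s2 x y k
            have hδle : δ ≤ x i - y i := min_le_left _ _
            linarith
        · have hjk : ¬ (j : ℕ) < k := by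
            intro h
            exact hik (lt_trans (by exact_mod_cast hij) h)
          rw [if_neg hik, if_neg hjk]
          linarith [hmaj.1 k hk]
      · have ht := hpsum' n
        rw [psum_total, psum_total, if_pos i.isLt, if_pos j.isLt] at ht
        rw [hmaj.2]
        linarith
    have hcard' : (univ.filter fun t => x t ≠ y' t).card ≤ d := by
      have hScard : 1 ≤ S.card := Finset.card_pos.mpr ⟨i, hiS⟩
      rcases min_cases (x i - y i) (y j - x j) with ⟨h, _⟩ | ⟨h, _⟩
      · have hδeq : δ = x i - y i := hδ.trans h
        have hsub : (univ.filter fun t => x t ≠ y' t) ⊆ S.erase i := by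
          intro t ht
          rw [mem_filter] at ht
          have htne : t ≠ i := by
            intro heq; subst heq
            exact ht.2 (by rw [hy'i, hδeq]; ring)
          have htS : t ∈ S := by
            by_cases hj2 : t = j
            · subst hj2; exact hjS
            · rw [hS, mem_filter]
              refine ⟨mem_univ t, ?_⟩
              rw [← hy'other t htne hj2]
              exact ht.2
          exact Finset.mem_erase.mpr ⟨htne, htS⟩
        have h1 := Finset.card_le_card hsub
        rw [Finset.card_erase_of_mem hiS] at h1
        omega
      · have hδeq : δ = y j - x j := hδ.trans h
        have hsub : (univ.filter fun t => x t ≠ y' t) ⊆ S.erase j := by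
          intro t ht
          rw [mem_filter] at ht
          have htne : t ≠ j := by
            intro heq; subst heq
            exact ht.2 (by rw [hy'j, hδeq]; ring)
          have htS : t ∈ S := by
            by_cases hi2 : t = i
            · subst hi2; exact hiS
            · rw [hS, mem_filter]
              refine ⟨mem_univ t, ?_⟩
              rw [← hy'other t hi2 htne]
              exact ht.2
          exact Finset.mem_erase.mpr ⟨htne, htS⟩
        have h1 := Finset.card_le_card hsub
        rw [Finset.card_erase_of_mem hjS] at h1
        omega
    obtain ⟨m, z, hz0, hzm, hstep⟩ := ih x y' hmaj' hcard'
    refine ⟨m + 1, fun l => if l = m + 1 then y else z l, ?_, ?_, ?_⟩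
    · show (if 0 = m + 1 then y else z 0) = x
      rw [if_neg (by omega : ¬ 0 = m + 1)]
      exact hz0
    · show (if m + 1 = m + 1 then y else z (m + 1)) = y
      rw [if_pos rfl]
    · intro l hl
      show UpSwap (if l = m + 1 then y else z l) (if l + 1 = m + 1 then y else z (l + 1))
      by_cases hlm : l = m
      · rw [if_neg (by omega : ¬ l = m + 1), if_pos (by omega : l + 1 = m + 1), hlm, hzm]
        exact hup
      · have hlt : l < m := by omega
        rw [if_neg (by omega : ¬ l = m + 1), if_neg (by omega : ¬ l + 1 = m + 1)]
        exact hstep l hlt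

/-- If `x ⪰ y` then `y` can be transformed into `x` by a finite chain of upward swaps. -/
theorem maj_chain_of_upward_swaps {n : ℕ} (x y : Fin n → ℝ) (hmaj : Maj x y) :
    ∃ (m : ℕ) (z : ℕ → Fin n → ℝ), z 0 = x ∧ z m = y ∧
      ∀ l, l < m → UpSwap (z l) (z (l + 1)) := by
  exact key (univ.filter fun t => x t ≠ y t).card x y hmaj le_rfl
end

section
/- For a differentiable symmetric function f : ℝ^n → ℝ, if f is Schur-convex then for every r ∈ ℝ^n and all indices i, j, (r_i − r_j)(∂f/∂r_i(r) − ∂f/∂r_j(r)) ≥ 0. -/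
open Finset

namespace SO

variable {n : ℕ}

noncomputable def permCLM (π : Equiv.Perm (Fin n)) : (Fin n → ℝ) →L[ℝ] (Fin n → ℝ) :=
  ContinuousLinearMap.pi (fun i => ContinuousLinearMap.proj (π i))

@[simp] lemma permCLM_apply (π : Equiv.Perm (Fin n)) (x : Fin n → ℝ) :
    permCLM π x = fun i => x (π i) := rfl

lemma fderiv_perm (f : (Fin n → ℝ) → ℝ) (hdiff : Differentiable ℝ f)
    (hsymm : ∀ (x : Fin n → ℝ) (π : Equiv.Perm (Fin n)), f (fun i => x (π i)) = f x)
    (π : Equiv.Perm (Fin n)) (x v : Fin n → ℝ) :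
    fderiv ℝ f x v = fderiv ℝ f (fun i => x (π i)) (fun i => v (π i)) := by
  have hcomp : f ∘ (permCLM π) = f := funext fun y => hsymm y π
  conv_lhs => rw [← hcomp]
  rw [fderiv_comp (x := x) (hdiff _) ((permCLM π).differentiableAt)]
  rw [ContinuousLinearMap.fderiv]
  rfl

lemma single_comp_perm (π : Equiv.Perm (Fin n)) (i : Fin n) :
    (fun k => (Pi.single i 1 : Fin n → ℝ) (π k)) = (Pi.single (π.symm i) 1 : Fin n → ℝ) := by
  funext k
  by_cases h : k = π.symm i
  · subst h; simp [Pi.single_apply]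
  · have h2 : π k ≠ i := fun hc => h (by simp [← hc])
    simp [Pi.single_apply, h, h2]

lemma fderiv_single_eq_of_eq (f : (Fin n → ℝ) → ℝ) (hdiff : Differentiable ℝ f)
    (hsymm : ∀ (x : Fin n → ℝ) (π : Equiv.Perm (Fin n)), f (fun i => x (π i)) = f x)
    (x : Fin n → ℝ) (a c : Fin n) (h : x a = x c) :
    fderiv ℝ f x (Pi.single a 1) = fderiv ℝ f x (Pi.single c 1) := by
  have := fderiv_perm f hdiff hsymm (Equiv.swap a c) x (Pi.single a 1)
  rw [single_comp_perm] at this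
  have hx : (fun i => x (Equiv.swap a c i)) = x := by
    funext k
    rcases eq_or_ne k a with rfl | hka
    · simp [h.symm]
    rcases eq_or_ne k c with rfl | hkc
    · simp [h]
    · rw [Equiv.swap_apply_of_ne_of_ne hka hkc]
  rw [hx] at this
  simpa using this

lemma psum_add (x y : Fin n → ℝ) (k : ℕ) : psum (x + y) k = psum x k + psum y k := by
  unfold psum
  rw [← Finset.sum_add_distrib]
  congr 1; funext i; by_cases h : (i:ℕ) < k <;> simp [h]

lemma psum_smul (t : ℝ) (x : Fin n → ℝ) (k : ℕ) : psum (t • x) k = t * psum x k := by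
  unfold psum
  rw [Finset.mul_sum]
  congr 1; funext i; by_cases h : (i:ℕ) < k <;> simp [h]

lemma psum_sub (x y : Fin n → ℝ) (k : ℕ) : psum (x - y) k = psum x k - psum y k := by
  unfold psum
  rw [← Finset.sum_sub_distrib]
  congr 1; funext i; by_cases h : (i:ℕ) < k <;> simp [h]

lemma psum_single (c : Fin n) (k : ℕ) :
    psum (Pi.single c 1) k = if (c:ℕ) < k then 1 else 0 := by
  unfold psum
  rw [Finset.sum_eq_single_of_mem c (Finset.mem_univ c)]
  · simp
  · intro i _ hi
    simp [Pi.single_eq_of_ne hi]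

lemma maj_perturb (s : Fin n → ℝ) (a' b' : Fin n) (hab : a' < b') (t : ℝ) (ht : 0 ≤ t) :
    Maj (s + t • (Pi.single a' 1 - Pi.single b' 1)) s := by
  constructor
  · intro k _
    rw [psum_add, psum_smul, psum_sub, psum_single, psum_single]
    have h1 : (0:ℝ) ≤ (if (a':ℕ) < k then (1:ℝ) else 0) - (if (b':ℕ) < k then 1 else 0) := by
      by_cases hb : (b':ℕ) < k
      · have ha : (a':ℕ) < k := lt_trans (by exact_mod_cast hab) hb
        simp [ha, hb]
      · by_cases ha : (a':ℕ) < k <;> simp [ha, hb]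
    nlinarith [mul_nonneg ht h1]
  · simp only [Pi.add_apply]
    rw [Finset.sum_add_distrib]
    have : ∑ i, (t • ((Pi.single a' 1 - Pi.single b' 1) : Fin n → ℝ)) i = 0 := by
      simp [Finset.sum_sub_distrib, Pi.single_apply, Finset.sum_ite_eq',
        Finset.mul_sum, mul_sub]
    rw [this, add_zero]

lemma antitone_perturb_ev (s : Fin n → ℝ) (hs : Antitone s) (a' b' : Fin n) (hab : a' < b')
    (ha'min : ∀ k, k < a' → s a' < s k) (hb'max : ∀ k, b' < k → s k < s b') :
    ∀ᶠ t : ℝ in nhdsWithin 0 (Set.Ioi 0),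
      Antitone (s + t • ((Pi.single a' 1 - Pi.single b' 1) : Fin n → ℝ)) := by
  set v : Fin n → ℝ := Pi.single a' 1 - Pi.single b' 1 with hvdef
  have hne : a' ≠ b' := ne_of_lt hab
  have hpos : ∀ᶠ t : ℝ in nhdsWithin 0 (Set.Ioi 0), 0 < t := by
    filter_upwards [self_mem_nhdsWithin] with t ht using ht
  have hv : ∀ k, v k = (Pi.single a' 1 : Fin n → ℝ) k - (Pi.single b' 1 : Fin n → ℝ) k := fun k => by
    rw [hvdef]; simp
  have hpair : ∀ p : Fin n × Fin n, ∀ᶠ t : ℝ in nhdsWithin 0 (Set.Ioi 0),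
      p.2 ≤ p.1 → (s + t • v) p.1 ≤ (s + t • v) p.2 := by
    rintro ⟨jj, ii⟩
    by_cases hij : ii ≤ jj
    swap
    · exact Filter.Eventually.of_forall (fun t h => absurd h hij)
    rcases eq_or_lt_of_le hij with rfl | hlt
    · exact Filter.Eventually.of_forall (fun t _ => le_rfl)
    simp only [Pi.add_apply, Pi.smul_apply, smul_eq_mul, hv]
    by_cases hja : jj = a'
    · -- ii < a', need t < s ii - s a'
      have hiia : ii ≠ a' := ne_of_lt (hja ▸ hlt)
      have hiib : ii ≠ b' := ne_of_lt (lt_trans (hja ▸ hlt) hab)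
      have hjb : jj ≠ b' := hja ▸ hne
      have hgap : 0 < s ii - s a' := sub_pos.2 (ha'min ii (hja ▸ hlt))
      filter_upwards [hpos, (gt_mem_nhds hgap).filter_mono nhdsWithin_le_nhds]
        with t ht htlt _
      have e1 : (Pi.single a' 1 : Fin n → ℝ) jj = 1 := by rw [hja]; simp
      have e2 : (Pi.single b' 1 : Fin n → ℝ) jj = 0 := Pi.single_eq_of_ne hjb 1
      have e3 : (Pi.single a' 1 : Fin n → ℝ) ii = 0 := Pi.single_eq_of_ne hiia 1
      have e4 : (Pi.single b' 1 : Fin n → ℝ) ii = 0 := Pi.single_eq_of_ne hiib 1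
      rw [e1, e2, e3, e4]
      have : s jj = s a' := by rw [hja]
      linarith
    · by_cases hib : ii = b'
      · -- jj > b', need t < s b' - s jj
        have hjjb : b' < jj := hib ▸ hlt
        have hjbne : jj ≠ b' := (ne_of_lt hjjb).symm
        have hiba : ii ≠ a' := hib ▸ (Ne.symm hne)
        have hgap : 0 < s b' - s jj := sub_pos.2 (hb'max jj hjjb)
        filter_upwards [hpos, (gt_mem_nhds hgap).filter_mono nhdsWithin_le_nhds]
          with t ht htlt _
        have e1 : (Pi.single a' 1 : Fin n → ℝ) jj = 0 := Pi.single_eq_of_ne hja 1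
        have e2 : (Pi.single b' 1 : Fin n → ℝ) jj = 0 := Pi.single_eq_of_ne hjbne 1
        have e3 : (Pi.single a' 1 : Fin n → ℝ) ii = 0 := Pi.single_eq_of_ne hiba 1
        have e4 : (Pi.single b' 1 : Fin n → ℝ) ii = 1 := by rw [hib]; simp
        rw [e1, e2, e3, e4]
        have : s ii = s b' := by rw [hib]
        linarith
      · -- remaining cases hold for all t ≥ 0
        filter_upwards [hpos] with t ht _
        have hsle : s jj ≤ s ii := hs hij
        rw [Pi.single_eq_of_ne hja, Pi.single_eq_of_ne hib]
        have hvj : (Pi.single b' 1 : Fin n → ℝ) jj = 0 ∨ (Pi.single b' 1 : Fin n → ℝ) jj = 1 := by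
          by_cases h : jj = b'
          · exact Or.inr (by rw [h]; simp)
          · exact Or.inl (Pi.single_eq_of_ne h 1)
        have hvi : (Pi.single a' 1 : Fin n → ℝ) ii = 0 ∨ (Pi.single a' 1 : Fin n → ℝ) ii = 1 := by
          by_cases h : ii = a'
          · exact Or.inr (by rw [h]; simp)
          · exact Or.inl (Pi.single_eq_of_ne h 1)
        rcases hvj with h1 | h1 <;> rcases hvi with h2 | h2 <;> rw [h1, h2] <;> nlinarith
  have hall := (Filter.eventually_all (ι := Fin n × Fin n)).2 hpair
  filter_upwards [hall] with t ht x y hxy using ht (y, x) hxy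
lemma key (f : (Fin n → ℝ) → ℝ) (hdiff : Differentiable ℝ f)
    (hsymm : ∀ (x : Fin n → ℝ) (π : Equiv.Perm (Fin n)), f (fun i => x (π i)) = f x)
    (hschur : ∀ x y : Fin n → ℝ, Antitone x → Antitone y → Maj x y → f y ≤ f x)
    (s : Fin n → ℝ) (hs : Antitone s) (a b : Fin n) (hab : s b < s a) :
    0 ≤ fderiv ℝ f s (Pi.single a 1) - fderiv ℝ f s (Pi.single b 1) := by
  classical
  set A : Finset (Fin n) := univ.filter (fun k => s k = s a) with hA
  have hAne : A.Nonempty := ⟨a, by simp [hA]⟩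
  set a' := A.min' hAne with ha'def
  have ha' : s a' = s a := by
    have := A.min'_mem hAne
    simp only [hA, Finset.mem_filter, Finset.mem_univ, true_and] at this
    exact this
  have ha'min : ∀ k, k < a' → s a' < s k := by
    intro k hk
    rcases (hs hk.le).lt_or_eq with h | h
    · exact h
    · have hmem : k ∈ A := by
        simp only [hA, Finset.mem_filter, Finset.mem_univ, true_and]
        rw [← h, ha']
      exact absurd (A.min'_le k hmem) (not_le.2 hk)
  set B : Finset (Fin n) := univ.filter (fun k => s k = s b) with hB
  have hBne : B.Nonempty := ⟨b, by simp [hB]⟩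
  set b' := B.max' hBne with hb'def
  have hb' : s b' = s b := by
    have := B.max'_mem hBne
    simp only [hB, Finset.mem_filter, Finset.mem_univ, true_and] at this
    exact this
  have hb'max : ∀ k, b' < k → s k < s b' := by
    intro k hk
    rcases (hs hk.le).lt_or_eq with h | h
    · exact h
    · have hmem : k ∈ B := by
        simp only [hB, Finset.mem_filter, Finset.mem_univ, true_and]
        rw [h, hb']
      exact absurd (B.le_max' k hmem) (not_le.2 hk)
  have hab' : a' < b' := by
    by_contra h
    push_neg at h
    have := hs h
    rw [ha', hb'] at this
    exact absurd hab (not_lt.2 this)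
  set v : Fin n → ℝ := Pi.single a' 1 - Pi.single b' 1 with hvdef
  set g : ℝ → ℝ := fun t => f (s + t • v) with hgdef
  have hderiv : HasDerivAt g (fderiv ℝ f s v) 0 := by
    have h1 : HasDerivAt (fun t : ℝ => s + t • v) v 0 := by
      simpa using ((hasDerivAt_id (0:ℝ)).smul_const v).const_add s
    have h2 : HasFDerivAt f (fderiv ℝ f s) ((fun t : ℝ => s + t • v) 0) := by
      simpa using (hdiff s).hasFDerivAt
    exact h2.comp_hasDerivAt 0 h1
  have hslope : ∀ᶠ t : ℝ in nhdsWithin 0 (Set.Ioi 0), 0 ≤ slope g 0 t := by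
    filter_upwards [antitone_perturb_ev s hs a' b' hab' ha'min hb'max,
      self_mem_nhdsWithin] with t hanti ht
    have hle : f s ≤ f (s + t • v) :=
      hschur _ _ hanti hs (maj_perturb s a' b' hab' t (le_of_lt ht))
    rw [slope_def_field]
    apply div_nonneg
    · have hg0 : g 0 = f s := by simp [hgdef]
      rw [hg0]
      exact sub_nonneg.2 hle
    · simpa using (le_of_lt ht)
  have hW : HasDerivWithinAt g (fderiv ℝ f s v) (Set.Ioi 0) 0 := hderiv.hasDerivWithinAt
  rw [hasDerivWithinAt_iff_tendsto_slope,
    Set.diff_singleton_eq_self (by simp : (0:ℝ) ∉ Set.Ioi 0)] at hW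
  have hnn : 0 ≤ fderiv ℝ f s v := ge_of_tendsto hW hslope
  have hfv : fderiv ℝ f s v
      = fderiv ℝ f s (Pi.single a' 1) - fderiv ℝ f s (Pi.single b' 1) := by
    rw [hvdef]; exact (fderiv ℝ f s).map_sub _ _
  rw [hfv, fderiv_single_eq_of_eq f hdiff hsymm s a' a ha',
    fderiv_single_eq_of_eq f hdiff hsymm s b' b hb'] at hnn
  exact hnn

lemma key_unsorted (f : (Fin n → ℝ) → ℝ) (hdiff : Differentiable ℝ f)
    (hsymm : ∀ (x : Fin n → ℝ) (π : Equiv.Perm (Fin n)), f (fun i => x (π i)) = f x)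
    (hschur : ∀ x y : Fin n → ℝ, Antitone x → Antitone y → Maj x y → f y ≤ f x)
    (r : Fin n → ℝ) (i j : Fin n) (hij : r j < r i) :
    0 ≤ fderiv ℝ f r (Pi.single i 1) - fderiv ℝ f r (Pi.single j 1) := by
  classical
  set σ := Tuple.sort (fun k => -r k) with hσ
  have hmono : Monotone ((fun k => -r k) ∘ σ) := Tuple.monotone_sort _
  set s : Fin n → ℝ := fun k => r (σ k) with hsdef
  have hs : Antitone s := by
    intro x y hxy
    have h := hmono hxy
    simp only [Function.comp_apply] at h
    simpa [hsdef] using h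
  have ha : s (σ.symm i) = r i := by simp [hsdef]
  have hb : s (σ.symm j) = r j := by simp [hsdef]
  have hkey := key f hdiff hsymm hschur s hs (σ.symm i) (σ.symm j) (by rw [ha, hb]; exact hij)
  have h1 : fderiv ℝ f r (Pi.single i 1) = fderiv ℝ f s (Pi.single (σ.symm i) 1) := by
    rw [fderiv_perm f hdiff hsymm σ r (Pi.single i 1), single_comp_perm]
  have h2 : fderiv ℝ f r (Pi.single j 1) = fderiv ℝ f s (Pi.single (σ.symm j) 1) := by
    rw [fderiv_perm f hdiff hsymm σ r (Pi.single j 1), single_comp_perm]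
  rw [h1, h2]
  exact hkey

end SO

/-- Schur–Ostrowski necessary condition: a differentiable symmetric Schur-convex
function satisfies `(r i - r j) * (∂f/∂r i - ∂f/∂r j) ≥ 0`. -/
theorem schur_ostrowski_necessary {n : ℕ} (f : (Fin n → ℝ) → ℝ)
    (hdiff : Differentiable ℝ f)
    (hsymm : ∀ (x : Fin n → ℝ) (π : Equiv.Perm (Fin n)), f (fun i => x (π i)) = f x)
    (hschur : ∀ x y : Fin n → ℝ, Antitone x → Antitone y → Maj x y → f y ≤ f x) :
    ∀ (r : Fin n → ℝ) (i j : Fin n),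
      0 ≤ (r i - r j) * (fderiv ℝ f r (Pi.single i 1) - fderiv ℝ f r (Pi.single j 1)) := by
  intro r i j
  rcases lt_trichotomy (r i) (r j) with h | h | h
  · have hk := SO.key_unsorted f hdiff hsymm hschur r j i h
    have h1 : r i - r j ≤ 0 := by linarith
    nlinarith
  · simp [h]
  · have hk := SO.key_unsorted f hdiff hsymm hschur r i j h
    have h1 : 0 ≤ r i - r j := by linarith
    nlinarith
end

section
/- The minimizer of ½‖y − r‖² + λ·∑_{i=1}^{n−1}(r_{i+1} − r_i)_+ converges, as λ → ∞, to the Euclidean projection of y onto the isotonic cone {r : r_1 ≥ r_2 ≥ ... ≥ r_n}. -/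
open Finset

/-- Soft-penalty objective with isotonic penalty of strength `lam`. -/
noncomputable def softObj {n : ℕ} (lam : ℝ) (y r : Fin n → ℝ) : ℝ :=
  (1 / 2) * ∑ i, (y i - r i) ^ 2 +
    lam * ∑ i : Fin n, ∑ j : Fin n, if (i : ℕ) + 1 = (j : ℕ) then max (r j - r i) 0 else 0


section aux
variable {n : ℕ}

/-- single-step penalty -/
noncomputable def pen (r : Fin n → ℝ) (a : Fin n) : ℝ :=
  if h : (a : ℕ) + 1 < n then max (r ⟨(a : ℕ) + 1, h⟩ - r a) 0 else 0

lemma pen_nonneg (r : Fin n → ℝ) (a : Fin n) : 0 ≤ pen r a := by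
  unfold pen; split <;> simp

/-- total penalty -/
noncomputable def Pen (r : Fin n → ℝ) : ℝ :=
  ∑ i : Fin n, ∑ j : Fin n, if (i : ℕ) + 1 = (j : ℕ) then max (r j - r i) 0 else 0

lemma sum_single_coe (g : Fin n → ℝ) (k : ℕ) (h : k < n) :
    ∑ a : Fin n, (if (a : ℕ) = k then g a else 0) = g ⟨k, h⟩ := by
  rw [Finset.sum_eq_single (⟨k, h⟩ : Fin n)]
  · simp
  · intro b _ hb
    rw [if_neg]
    intro hc; exact hb (Fin.ext hc)
  · simp

lemma Pen_eq (r : Fin n → ℝ) : Pen r = ∑ a : Fin n, pen r a := by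
  unfold Pen pen
  refine Finset.sum_congr rfl fun a _ => ?_
  split
  · next h =>
    rw [← sum_single_coe (fun j => max (r j - r a) 0) ((a : ℕ) + 1) h]
    refine Finset.sum_congr rfl fun j _ => ?_
    simp [eq_comm]
  · next h =>
    refine Finset.sum_eq_zero fun j _ => ?_
    rw [if_neg]
    intro hc; exact h (hc ▸ j.isLt)

lemma Pen_nonneg (r : Fin n → ℝ) : 0 ≤ Pen r := by
  rw [Pen_eq]; exact Finset.sum_nonneg fun a _ => pen_nonneg r a

lemma Pen_of_antitone {p : Fin n → ℝ} (hp : Antitone p) : Pen p = 0 := by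
  unfold Pen
  refine Finset.sum_eq_zero fun i _ => Finset.sum_eq_zero fun j _ => ?_
  split
  · next h =>
    have hij : i ≤ j := by rw [Fin.le_def]; omega
    have := hp hij
    simp [max_eq_right, sub_nonpos.2 this]
  · rfl

lemma gap_le_T (r : Fin n → ℝ) : ∀ m : ℕ, ∀ i j : Fin n, (j : ℕ) = (i : ℕ) + m →
    r j - r i ≤ ∑ a : Fin n,
      (if (i : ℕ) ≤ (a : ℕ) ∧ (a : ℕ) < (j : ℕ) then pen r a else 0) := by
  intro m
  induction m with
  | zero =>
    intro i j hj
    have : j = i := Fin.ext (by omega)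
    subst this
    have : r j - r j = 0 := sub_self _
    rw [this]
    exact Finset.sum_nonneg fun a _ => by split <;> [exact pen_nonneg r a; exact le_rfl]
  | succ m ih =>
    intro i j hj
    have hjn := j.isLt
    have hlt : (i : ℕ) + m < n := by omega
    set j' : Fin n := ⟨(i : ℕ) + m, hlt⟩ with hj'
    have h1 : r j' - r i ≤ ∑ a : Fin n,
        (if (i : ℕ) ≤ (a : ℕ) ∧ (a : ℕ) < (j' : ℕ) then pen r a else 0) := ih i j' rfl
    have h2 : r j - r j' ≤ pen r j' := by
      unfold pen
      have hcond : (j' : ℕ) + 1 < n := by simp [hj']; omega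
      rw [dif_pos hcond]
      have : (⟨(j' : ℕ) + 1, hcond⟩ : Fin n) = j := Fin.ext (by simp [hj']; omega)
      rw [this]
      exact le_max_left _ _
    have h3 : ∑ a : Fin n, (if (i : ℕ) ≤ (a : ℕ) ∧ (a : ℕ) < (j : ℕ) then pen r a else 0)
        = (∑ a : Fin n, (if (i : ℕ) ≤ (a : ℕ) ∧ (a : ℕ) < (j' : ℕ) then pen r a else 0))
          + pen r j' := by
      rw [← sum_single_coe (fun a => pen r a) ((i : ℕ) + m) hlt, ← Finset.sum_add_distrib]
      refine Finset.sum_congr rfl fun a _ => ?_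
      have h4 : (j : ℕ) = (i : ℕ) + m + 1 := hj
      have h5 : (j' : ℕ) = (i : ℕ) + m := rfl
      split_ifs <;> first | ring1 | (exfalso; omega)
    linarith
  
lemma gap_le_Pen (r : Fin n → ℝ) (i j : Fin n) (hij : i ≤ j) : r j - r i ≤ Pen r := by
  have hm : (j : ℕ) = (i : ℕ) + ((j : ℕ) - (i : ℕ)) := by
    have : (i : ℕ) ≤ (j : ℕ) := hij
    omega
  refine (gap_le_T r _ i j hm).trans ?_
  rw [Pen_eq]
  refine Finset.sum_le_sum fun a _ => ?_
  split <;> [exact le_rfl; exact pen_nonneg r a]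

/-- Euclidean length -/
noncomputable def en (x : Fin n → ℝ) : ℝ := Real.sqrt (∑ i, x i ^ 2)

lemma en_nonneg (x : Fin n → ℝ) : 0 ≤ en x := Real.sqrt_nonneg _

lemma sq_en (x : Fin n → ℝ) : en x ^ 2 = ∑ i, x i ^ 2 :=
  Real.sq_sqrt (Finset.sum_nonneg fun i _ => sq_nonneg _)

lemma abs_le_en (x : Fin n → ℝ) (i : Fin n) : |x i| ≤ en x := by
  rw [← Real.sqrt_sq_eq_abs]
  exact Real.sqrt_le_sqrt (Finset.single_le_sum (fun j _ => sq_nonneg (x j)) (mem_univ i))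

lemma en_le_sqrt {x : Fin n → ℝ} {c : ℝ} (h : ∑ i, x i ^ 2 ≤ c) : en x ≤ Real.sqrt c :=
  Real.sqrt_le_sqrt h

lemma inner_le_en (x z : Fin n → ℝ) : ∑ i, x i * z i ≤ en x * en z := by
  have h := sum_mul_sq_le_sq_mul_sq univ x z
  have h2 : (∑ i, x i * z i) ≤ |∑ i, x i * z i| := le_abs_self _
  refine h2.trans ?_
  rw [← Real.sqrt_sq_eq_abs]
  have : en x * en z = Real.sqrt ((∑ i, x i ^ 2) * ∑ i, z i ^ 2) := by
    rw [en, en, ← Real.sqrt_mul (Finset.sum_nonneg fun i _ => sq_nonneg _)]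
  rw [this]
  exact Real.sqrt_le_sqrt h

lemma en_triangle (x z : Fin n → ℝ) : en (fun i => x i + z i) ≤ en x + en z := by
  have hxz := inner_le_en x z
  have h1 : ∑ i, (x i + z i) ^ 2 ≤ (en x + en z) ^ 2 := by
    have : ∑ i, (x i + z i) ^ 2 = ∑ i, x i ^ 2 + 2 * ∑ i, x i * z i + ∑ i, z i ^ 2 := by
      rw [Finset.mul_sum, ← Finset.sum_add_distrib, ← Finset.sum_add_distrib]
      exact Finset.sum_congr rfl fun i _ => by ring
    rw [this]
    have ex := sq_en x; have ez := sq_en z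
    nlinarith [en_nonneg x, en_nonneg z]
  calc en (fun i => x i + z i) ≤ Real.sqrt ((en x + en z) ^ 2) := Real.sqrt_le_sqrt h1
    _ = |en x + en z| := Real.sqrt_sq_eq_abs _
    _ = en x + en z := abs_of_nonneg (add_nonneg (en_nonneg x) (en_nonneg z))

end aux

section vi
variable {n : ℕ}

lemma proj_vi (y p q : Fin n → ℝ) (hproj : IsProj (IsoCone n) y p)
    (hq : Antitone q) :
    ∑ i, (q i - p i) ^ 2 ≤ ∑ i, (y i - q i) ^ 2 - ∑ i, (y i - p i) ^ 2 := by
  obtain ⟨hp, hmin⟩ := hproj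
  have hp' : Antitone p := hp
  set c : ℝ := ∑ i, (y i - p i) * (q i - p i) with hc
  set s : ℝ := ∑ i, (q i - p i) ^ 2 with hs
  have hs0 : 0 ≤ s := Finset.sum_nonneg fun i _ => sq_nonneg _
  -- for each t ∈ (0,1], 2c ≤ t s
  have key : ∀ t : ℝ, 0 < t → t ≤ 1 → 2 * c ≤ t * s := by
    intro t ht0 ht1
    have hmem : (fun i => p i + t * (q i - p i)) ∈ IsoCone n := by
      intro a b hab
      have h1 := hp' hab
      have h2 := hq hab
      dsimp only
      nlinarith
    have h := hmin _ hmem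
    have hexp : ∑ i, (y i - (p i + t * (q i - p i))) ^ 2
        = ∑ i, (y i - p i) ^ 2 - 2 * t * c + t ^ 2 * s := by
      rw [hc, hs, Finset.mul_sum, Finset.mul_sum, ← Finset.sum_sub_distrib,
        ← Finset.sum_add_distrib]
      exact Finset.sum_congr rfl fun i _ => by ring
    rw [hexp] at h
    nlinarith
  have hcle : c ≤ 0 := by
    by_contra hcpos
    push_neg at hcpos
    have hspos : 0 < s := by
      rcases lt_or_eq_of_le hs0 with h | h
      · exact h
      · have := key 1 one_pos le_rfl
        nlinarith
    have ht0 : 0 < min 1 (c / s) := lt_min one_pos (div_pos hcpos hspos)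
    have := key _ ht0 (min_le_left _ _)
    have h2 : min 1 (c / s) * s ≤ (c / s) * s := by
      apply mul_le_mul_of_nonneg_right (min_le_right _ _) hs0
    rw [div_mul_cancel₀ _ (ne_of_gt hspos)] at h2
    linarith
  have hexpand : ∑ i, (y i - q i) ^ 2 = ∑ i, (y i - p i) ^ 2 - 2 * c + s := by
    rw [hc, hs, Finset.mul_sum, ← Finset.sum_sub_distrib, ← Finset.sum_add_distrib]
    exact Finset.sum_congr rfl fun i _ => by ring
  rw [hexpand]
  linarith

lemma key_bound (y p r : Fin n → ℝ) (hproj : IsProj (IsoCone n) y p)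
    (e : ℝ) (he : 0 ≤ e) (hPen : Pen r ≤ e)
    (hDr : ∑ i, (y i - r i) ^ 2 ≤ ∑ i, (y i - p i) ^ 2) (i : Fin n) :
    |r i - p i| ≤ e + Real.sqrt ((Real.sqrt (∑ i, (y i - p i) ^ 2)
      + Real.sqrt n * e) ^ 2 - ∑ i, (y i - p i) ^ 2) := by
  set A : ℝ := Real.sqrt (∑ i, (y i - p i) ^ 2) with hA
  have hA0 : 0 ≤ A := Real.sqrt_nonneg _
  have hA2 : A ^ 2 = ∑ i, (y i - p i) ^ 2 :=
    Real.sq_sqrt (Finset.sum_nonneg fun j _ => sq_nonneg _)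
  -- the monotone fix of r
  set q : Fin n → ℝ := fun a => (Finset.Ici a).sup' ⟨a, Finset.mem_Ici.2 le_rfl⟩ r with hqdef
  have hrq : ∀ a, r a ≤ q a := fun a => Finset.le_sup' r (Finset.mem_Ici.2 le_rfl)
  have hqr : ∀ a, q a - r a ≤ e := by
    intro a
    obtain ⟨b, hb, hqb⟩ := Finset.exists_mem_eq_sup' (⟨a, Finset.mem_Ici.2 le_rfl⟩) r
    have hqa : q a = r b := hqb
    rw [hqa]
    exact (gap_le_Pen r a b (Finset.mem_Ici.1 hb)).trans hPen
  have hqanti : Antitone q := by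
    intro a b hab
    refine Finset.sup'_le _ _ fun x hx => ?_
    exact Finset.le_sup' r (Finset.mem_Ici.2 ((Finset.mem_Ici.1 hx).trans' hab))
  -- ‖r - q‖ bounds
  have hrq_sum : ∑ a, (r a - q a) ^ 2 ≤ (n : ℝ) * e ^ 2 := by
    calc ∑ a, (r a - q a) ^ 2 ≤ ∑ _a : Fin n, e ^ 2 := by
          refine Finset.sum_le_sum fun a _ => ?_
          have h1 := hrq a; have h2 := hqr a
          nlinarith
      _ = (n : ℝ) * e ^ 2 := by simp [Finset.sum_const, Finset.card_univ, nsmul_eq_mul]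
  have hen_rq : en (fun a => r a - q a) ≤ Real.sqrt n * e := by
    refine (en_le_sqrt hrq_sum).trans ?_
    rw [Real.sqrt_mul (Nat.cast_nonneg n), Real.sqrt_sq he]
  -- ‖y - q‖ ≤ A + √n e
  have hen_yr : en (fun a => y a - r a) ≤ A := en_le_sqrt hDr
  have hen_yq : en (fun a => y a - q a) ≤ A + Real.sqrt n * e := by
    have : (fun a => y a - q a) = fun a => (y a - r a) + (r a - q a) := by
      funext a; ring
    rw [this]
    exact (en_triangle _ _).trans (add_le_add hen_yr hen_rq)
  -- VI
  have hvi := proj_vi y p q hproj hqanti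
  have hsum_yq : ∑ a, (y a - q a) ^ 2 ≤ (A + Real.sqrt n * e) ^ 2 := by
    have := sq_en (fun a => y a - q a)
    nlinarith [en_nonneg (fun a => y a - q a), Real.sqrt_nonneg (n : ℝ)]
  have hqp : ∑ a, (q a - p a) ^ 2 ≤ (A + Real.sqrt n * e) ^ 2 - A ^ 2 := by
    rw [hA2]; linarith
  have hqp_en : en (fun a => q a - p a)
      ≤ Real.sqrt ((A + Real.sqrt n * e) ^ 2 - A ^ 2) := en_le_sqrt hqp
  have h1 : |r i - q i| ≤ e := by
    rw [abs_sub_comm, abs_of_nonneg (sub_nonneg.2 (hrq i))]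
    exact hqr i
  have h2 : |q i - p i| ≤ Real.sqrt ((A + Real.sqrt n * e) ^ 2 - A ^ 2) :=
    (abs_le_en (fun a => q a - p a) i).trans hqp_en
  calc |r i - p i| = |(r i - q i) + (q i - p i)| := by ring_nf
    _ ≤ |r i - q i| + |q i - p i| := abs_add_le _ _
    _ ≤ e + Real.sqrt ((A + Real.sqrt n * e) ^ 2 - A ^ 2) := add_le_add h1 h2
    _ = e + Real.sqrt ((A + Real.sqrt n * e) ^ 2 - ∑ i, (y i - p i) ^ 2) := by rw [hA2]

end vi

open Filter in
theorem aux_soft_penalty_recovers {n : ℕ} (y p : Fin n → ℝ)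
    (hproj : IsProj (IsoCone n) y p)
    (rhat : ℝ → Fin n → ℝ)
    (hmin : ∀ lam : ℝ, 0 < lam → ∀ r : Fin n → ℝ,
      (1 / 2) * ∑ i, (y i - rhat lam i) ^ 2 + lam * Pen (rhat lam) ≤
      (1 / 2) * ∑ i, (y i - r i) ^ 2 + lam * Pen r) :
    Filter.Tendsto rhat Filter.atTop (nhds p) := by
  rw [tendsto_pi_nhds]
  intro i
  have hp : Antitone p := hproj.1
  set Dp : ℝ := ∑ j, (y j - p j) ^ 2 with hDp
  have hDp0 : 0 ≤ Dp := Finset.sum_nonneg fun j _ => sq_nonneg _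
  set A : ℝ := Real.sqrt Dp with hA
  set B : ℝ → ℝ := fun lam => (Dp / 2) * lam⁻¹ +
    Real.sqrt ((A + Real.sqrt n * ((Dp / 2) * lam⁻¹)) ^ 2 - Dp) with hB
  have hbound : ∀ᶠ lam in atTop, |rhat lam i - p i| ≤ B lam := by
    filter_upwards [Filter.eventually_gt_atTop 0] with lam hlam
    have hPp : Pen p = 0 := Pen_of_antitone hp
    have hobj := hmin lam hlam p
    rw [hPp, mul_zero, add_zero] at hobj
    have hP0 : 0 ≤ Pen (rhat lam) := Pen_nonneg _
    have hD0 : 0 ≤ ∑ j, (y j - rhat lam j) ^ 2 := Finset.sum_nonneg fun j _ => sq_nonneg _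
    have he : 0 ≤ (Dp / 2) * lam⁻¹ := by positivity
    have hPen : Pen (rhat lam) ≤ (Dp / 2) * lam⁻¹ := by
      have h1 : lam * Pen (rhat lam) ≤ Dp / 2 := by linarith
      calc Pen (rhat lam) = (lam * Pen (rhat lam)) * lam⁻¹ := by
            field_simp
          _ ≤ (Dp / 2) * lam⁻¹ :=
            mul_le_mul_of_nonneg_right h1 (inv_nonneg.2 hlam.le)
    have hDr : ∑ j, (y j - rhat lam j) ^ 2 ≤ Dp := by
      have := mul_nonneg hlam.le hP0
      linarith
    exact key_bound y p (rhat lam) hproj _ he hPen hDr i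
  have hB0 : Filter.Tendsto B atTop (nhds 0) := by
    have he0 : Filter.Tendsto (fun lam : ℝ => (Dp / 2) * lam⁻¹) atTop (nhds 0) := by
      have := tendsto_inv_atTop_zero.const_mul (Dp / 2)
      simpa using this
    have hcont : Continuous (fun t : ℝ => t + Real.sqrt ((A + Real.sqrt n * t) ^ 2 - Dp)) := by
      have : Continuous (fun t : ℝ => (A + Real.sqrt n * t) ^ 2 - Dp) := by
        continuity
      exact continuous_id.add (Real.continuous_sqrt.comp this)
    have hf0 : (fun t : ℝ => t + Real.sqrt ((A + Real.sqrt n * t) ^ 2 - Dp)) 0 = 0 := by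
      simp [hA, Real.sq_sqrt hDp0]
    exact (hcont.tendsto' 0 0 hf0).comp he0
  have habs : Filter.Tendsto (fun lam => |rhat lam i - p i|) atTop (nhds 0) :=
    squeeze_zero' (Filter.Eventually.of_forall fun _ => abs_nonneg _) hbound hB0
  rw [tendsto_iff_dist_tendsto_zero]
  simpa [Real.dist_eq] using habs

/-- As `λ → ∞`, the soft-penalty minimizer converges to the isotonic projection. -/
theorem soft_penalty_recovers_isotonic {n : ℕ} (y p : Fin n → ℝ)
    (hproj : IsProj (IsoCone n) y p)
    (rhat : ℝ → Fin n → ℝ)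
    (hmin : ∀ lam : ℝ, 0 < lam → ∀ r : Fin n → ℝ, softObj lam y (rhat lam) ≤ softObj lam y r) :
    Filter.Tendsto rhat Filter.atTop (nhds p) := by
  refine aux_soft_penalty_recovers y p hproj rhat fun lam hlam r => ?_
  simpa [softObj, Pen] using hmin lam hlam r
end

section
/- The projection x⁺ of x ∈ ℝ^n onto the isotonic cone is given by the min-max formula: x⁺_i = min_{j ≤ i} max_{k ≥ i} (x_j + x_{j+1} + ... + x_k)/(k − j + 1). -/
open Finset

lemma small_t_aux (A B t0 : ℝ) (ht0 : 0 < t0) (hB : 0 ≤ B)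
    (h : ∀ t : ℝ, 0 < t → t ≤ t0 → 2 * A ≤ t * B) : A ≤ 0 := by
  by_contra hA
  push_neg at hA
  have h1 : 0 < A / (B + 1) := div_pos hA (by linarith)
  have ht : 0 < min t0 (A / (B + 1)) := lt_min ht0 h1
  have h2 := h _ ht (min_le_left _ _)
  have h3 : min t0 (A / (B + 1)) * B ≤ (A / (B + 1)) * B :=
    mul_le_mul_of_nonneg_right (min_le_right _ _) hB
  have h4 : (A / (B + 1)) * B ≤ A := by
    rw [div_mul_eq_mul_div, div_le_iff₀ (by linarith)]
    nlinarith
  linarith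

lemma dir_ineq_aux {n : ℕ} (x p : Fin n → ℝ) (hproj : IsProj (IsoCone n) x p)
    (d : Fin n → ℝ) (t0 : ℝ) (ht0 : 0 < t0)
    (hmem : ∀ t : ℝ, 0 < t → t ≤ t0 → Antitone (fun l => p l + t * d l)) :
    ∑ l, (x l - p l) * d l ≤ 0 := by
  set A := ∑ l, (x l - p l) * d l with hA
  set B := ∑ l, (d l) ^ 2 with hB
  have hBnn : 0 ≤ B := Finset.sum_nonneg fun l _ => sq_nonneg _
  refine small_t_aux A B t0 ht0 hBnn fun t ht htle => ?_
  have hq : (fun l => p l + t * d l) ∈ IsoCone n := hmem t ht htle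
  have hle : ∑ l, (x l - p l) ^ 2 ≤ ∑ l, (x l - (p l + t * d l)) ^ 2 := hproj.2 _ hq
  have hexp : ∑ l, (x l - (p l + t * d l)) ^ 2
      = ∑ l, (x l - p l) ^ 2 - 2 * t * A + t ^ 2 * B := by
    rw [hA, hB, Finset.mul_sum, Finset.mul_sum, ← Finset.sum_sub_distrib,
      ← Finset.sum_add_distrib]
    exact Finset.sum_congr rfl fun l _ => by ring
  rw [hexp] at hle
  nlinarith

lemma prefix_le_aux {n : ℕ} (x p : Fin n → ℝ) (hproj : IsProj (IsoCone n) x p)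
    (s : Finset (Fin n)) (hlow : ∀ l l' : Fin n, l ≤ l' → l' ∈ s → l ∈ s) :
    ∑ l ∈ s, (x l - p l) ≤ 0 := by
  have hanti : Antitone p := hproj.1
  have key := dir_ineq_aux x p hproj (fun l => if l ∈ s then (1:ℝ) else 0) 1 one_pos ?_
  · simpa [mul_ite, mul_one, mul_zero] using key
  · intro t ht _ l l' hll'
    dsimp only
    by_cases h' : l' ∈ s
    · have hl : l ∈ s := hlow l l' hll' h'
      simp only [h', hl, if_pos]
      have := hanti hll'; linarith
    · by_cases hl : l ∈ s
      · simp only [h', hl, if_pos, if_neg, not_false_iff]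
        have := hanti hll'; linarith
      · simp only [h', hl, if_neg, not_false_iff]
        have := hanti hll'; linarith

lemma prefix_ge_aux {n : ℕ} (x p : Fin n → ℝ) (hproj : IsProj (IsoCone n) x p)
    (s : Finset (Fin n)) (hlow : ∀ l l' : Fin n, l ≤ l' → l' ∈ s → l ∈ s)
    (t0 : ℝ) (ht0 : 0 < t0)
    (hgap : ∀ l ∈ s, ∀ l' ∉ s, p l' ≤ p l - t0) :
    0 ≤ ∑ l ∈ s, (x l - p l) := by
  have hanti : Antitone p := hproj.1
  have key := dir_ineq_aux x p hproj (fun l => if l ∈ s then (-1:ℝ) else 0) t0 ht0 ?_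
  · have : ∑ l, (x l - p l) * (if l ∈ s then (-1:ℝ) else 0)
        = -∑ l ∈ s, (x l - p l) := by
      rw [← Finset.sum_neg_distrib]
      simp [mul_ite]
    rw [this] at key
    linarith
  · intro t ht htle l l' hll'
    dsimp only
    by_cases h' : l' ∈ s
    · have hl : l ∈ s := hlow l l' hll' h'
      simp only [h', hl, if_pos]
      have := hanti hll'; linarith
    · by_cases hl : l ∈ s
      · simp only [h', hl, if_pos, if_neg, not_false_iff]
        have := hgap l hl l' h'
        linarith
      · simp only [h', hl, if_neg, not_false_iff]
        have := hanti hll'; linarith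

lemma icc_split_aux {n : ℕ} (j k : Fin n) (hjk : j ≤ k) (f : Fin n → ℝ) :
    ∑ l ∈ Icc j k, f l = ∑ l ∈ Iic k, f l - ∑ l ∈ Iio j, f l := by
  have hsub : Iio j ⊆ Iic k := fun l hl =>
    mem_Iic.mpr (le_trans (le_of_lt (mem_Iio.mp hl)) hjk)
  have h2 : Iic k \ Iio j = Icc j k := by
    ext l
    simp only [mem_sdiff, mem_Iic, mem_Iio, mem_Icc, not_lt]
    tauto
  rw [← h2, Finset.sum_sdiff_eq_sub hsub]

/-- Min-max characterization of isotonic regression. -/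
theorem isotonic_projection_minmax {n : ℕ} (x p : Fin n → ℝ)
    (hproj : IsProj (IsoCone n) x p) :
    ∀ i : Fin n,
      p i = (Finset.Iic i).inf' ⟨i, Finset.mem_Iic.mpr le_rfl⟩ (fun j =>
        (Finset.Ici i).sup' ⟨i, Finset.mem_Ici.mpr le_rfl⟩ (fun k =>
          (∑ l ∈ Finset.Icc j k, x l) / ((Finset.Icc j k).card : ℝ))) := by
  intro i
  have hanti : Antitone p := hproj.1
  -- block start a and end b
  have hAne : ((Iic i).filter (fun j => p j = p i)).Nonempty := ⟨i, by simp⟩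
  set a := ((Iic i).filter (fun j => p j = p i)).min' hAne with ha
  have haA := Finset.min'_mem _ hAne
  rw [Finset.mem_filter, mem_Iic] at haA
  have hai : a ≤ i := haA.1
  have hpa : p a = p i := haA.2
  have hBne : ((Ici i).filter (fun j => p j = p i)).Nonempty := ⟨i, by simp⟩
  set b := ((Ici i).filter (fun j => p j = p i)).max' hBne with hb
  have hbB := Finset.max'_mem _ hBne
  rw [Finset.mem_filter, mem_Ici] at hbB
  have hib : i ≤ b := hbB.1
  have hpb : p b = p i := hbB.2
  -- partial sum inequalities
  have hSle : ∀ k : Fin n, ∑ l ∈ Iic k, (x l - p l) ≤ 0 := fun k =>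
    prefix_le_aux x p hproj _ (fun l l' hll' hl' =>
      mem_Iic.mpr (le_trans hll' (mem_Iic.mp hl')))
  have hTle : ∀ j : Fin n, ∑ l ∈ Iio j, (x l - p l) ≤ 0 := fun j =>
    prefix_le_aux x p hproj _ (fun l l' hll' hl' =>
      mem_Iio.mpr (lt_of_le_of_lt hll' (mem_Iio.mp hl')))
  -- ∑_{l < a} (x - p) = 0
  have hT0 : ∑ l ∈ Iio a, (x l - p l) = 0 := by
    refine le_antisymm (hTle a) ?_
    rcases Nat.eq_zero_or_pos a.val with h0 | hpos
    · have he : Iio a = ∅ := by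
        ext l; simp only [mem_Iio, Finset.notMem_empty, iff_false, not_lt]
        exact Fin.le_def.mpr (by omega)
      simp [he]
    · have ha'lt : a.val - 1 < n := by omega
      set a' : Fin n := ⟨a.val - 1, ha'lt⟩ with ha'
      have ha'a : a' < a := by rw [Fin.lt_def]; simp [ha']; omega
      have hpa' : p a < p a' := by
        rcases lt_or_eq_of_le (hanti ha'a.le) with h | h
        · exact h
        · exfalso
          have ha'mem : a' ∈ (Iic i).filter (fun j => p j = p i) := by
            rw [Finset.mem_filter, mem_Iic]
            exact ⟨le_trans ha'a.le hai, by rw [← h, hpa]⟩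
          have := Finset.min'_le _ _ ha'mem
          rw [← ha] at this
          exact absurd ha'a (not_lt.mpr this)
      refine prefix_ge_aux x p hproj _ (fun l l' hll' hl' =>
        mem_Iio.mpr (lt_of_le_of_lt hll' (mem_Iio.mp hl'))) (p a' - p a)
        (by linarith) ?_
      intro l hl l' hl'
      rw [mem_Iio] at hl
      rw [mem_Iio, not_lt] at hl'
      have h1 : l ≤ a' := by
        rw [Fin.le_def]; simp [ha']
        have := Fin.lt_def.mp hl; omega
      have h2 : p a' ≤ p l := hanti h1
      have h3 : p l' ≤ p a := hanti hl'
      linarith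
  -- ∑_{l ≤ b} (x - p) = 0
  have hS0 : ∑ l ∈ Iic b, (x l - p l) = 0 := by
    refine le_antisymm (hSle b) ?_
    rcases lt_or_ge (b.val + 1) n with hb1 | hb2
    · set b' : Fin n := ⟨b.val + 1, hb1⟩ with hb'
      have hbb' : b < b' := by rw [Fin.lt_def]; simp [hb']
      have hpb' : p b' < p b := by
        rcases lt_or_eq_of_le (hanti hbb'.le) with h | h
        · exact h
        · exfalso
          have hb'mem : b' ∈ (Ici i).filter (fun j => p j = p i) := by
            rw [Finset.mem_filter, mem_Ici]
            exact ⟨le_trans hib hbb'.le, by rw [h, hpb]⟩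
          have := Finset.le_max' _ _ hb'mem
          rw [← hb] at this
          exact absurd hbb' (not_lt.mpr this)
      refine prefix_ge_aux x p hproj _ (fun l l' hll' hl' =>
        mem_Iic.mpr (le_trans hll' (mem_Iic.mp hl'))) (p b - p b')
        (by linarith) ?_
      intro l hl l' hl'
      rw [mem_Iic] at hl
      rw [mem_Iic, not_le] at hl'
      have h1 : b' ≤ l' := by
        rw [Fin.le_def]; simp [hb']
        have := Fin.lt_def.mp hl'; omega
      have h2 : p l' ≤ p b' := hanti h1
      have h3 : p b ≤ p l := hanti hl
      linarith
    · refine prefix_ge_aux x p hproj _ (fun l l' hll' hl' =>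
        mem_Iic.mpr (le_trans hll' (mem_Iic.mp hl'))) 1 one_pos ?_
      intro l _ l' hl'
      exfalso
      apply hl'
      rw [mem_Iic, Fin.le_def]
      omega
  -- average bounds
  have hub : ∀ k ∈ Ici i, (∑ l ∈ Icc a k, x l) / ((Icc a k).card : ℝ) ≤ p i := by
    intro k hk
    rw [mem_Ici] at hk
    have hak : a ≤ k := le_trans hai hk
    have hcard : 0 < (Icc a k).card :=
      Finset.card_pos.mpr ⟨a, mem_Icc.mpr ⟨le_refl a, hak⟩⟩
    have hcardR : (0:ℝ) < ((Icc a k).card : ℝ) := by exact_mod_cast hcard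
    rw [div_le_iff₀ hcardR]
    have h1 : ∑ l ∈ Icc a k, x l
        = ∑ l ∈ Icc a k, (x l - p l) + ∑ l ∈ Icc a k, p l := by
      rw [← Finset.sum_add_distrib]; exact Finset.sum_congr rfl fun l _ => by ring
    have h2 : ∑ l ∈ Icc a k, (x l - p l) ≤ 0 := by
      rw [icc_split_aux a k hak, hT0]
      simpa using hSle k
    have h3 : ∑ l ∈ Icc a k, p l ≤ ((Icc a k).card : ℝ) * p i := by
      have := Finset.sum_le_card_nsmul (Icc a k) p (p i)
        (fun l hl => hpa ▸ hanti (mem_Icc.mp hl).1)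
      simpa [nsmul_eq_mul] using this
    linarith
  have hlb : ∀ j ∈ Iic i, p i ≤ (∑ l ∈ Icc j b, x l) / ((Icc j b).card : ℝ) := by
    intro j hj
    rw [mem_Iic] at hj
    have hjb : j ≤ b := le_trans hj hib
    have hcard : 0 < (Icc j b).card :=
      Finset.card_pos.mpr ⟨j, mem_Icc.mpr ⟨le_refl j, hjb⟩⟩
    have hcardR : (0:ℝ) < ((Icc j b).card : ℝ) := by exact_mod_cast hcard
    rw [le_div_iff₀ hcardR]
    have h1 : ∑ l ∈ Icc j b, x l
        = ∑ l ∈ Icc j b, (x l - p l) + ∑ l ∈ Icc j b, p l := by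
      rw [← Finset.sum_add_distrib]; exact Finset.sum_congr rfl fun l _ => by ring
    have h2 : 0 ≤ ∑ l ∈ Icc j b, (x l - p l) := by
      rw [icc_split_aux j b hjb, hS0]
      have := hTle j; linarith
    have h3 : ((Icc j b).card : ℝ) * p i ≤ ∑ l ∈ Icc j b, p l := by
      have := Finset.card_nsmul_le_sum (Icc j b) p (p i)
        (fun l hl => hpb ▸ hanti (mem_Icc.mp hl).2)
      simpa [nsmul_eq_mul] using this
    linarith
  refine le_antisymm ?_ ?_
  · apply Finset.le_inf'
    intro j hj
    exact le_trans (hlb j hj) (Finset.le_sup'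
      (fun k => (∑ l ∈ Icc j k, x l) / ((Icc j k).card : ℝ)) (mem_Ici.mpr hib))
  · exact le_trans (Finset.inf'_le _ (mem_Iic.mpr hai))
      (Finset.sup'_le _ _ hub)
end
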